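/- arXiv:2207.13994 — 3 statements merged into one kernel-verified Lean document; each statement's English description precedes it below -/
import Mathlib

section
/- Let a > 0, λ > 1, and ξ = λa/(λ−1). Then for all z with 0 < z ≤ ξ one has ((ξ − a)/ξ^λ) z^λ ≥ z − a, with equality if and only if z = ξ. That is, the candidate value function dominates the reward g(z) = z − a on the continuation region. -/
/-- For `a > 0`, `λ > 1`, `ξ = λa/(λ−1)`: for all `0 < z ≤ ξ`,
`((ξ−a)/ξ^λ) z^λ ≥ z − a`, with equality iff `z = ξ`. -/
theorem stmt8 (a lam : ℝ) (ha : 0 < a) (hlam : 1 < lam)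
    (ξ : ℝ) (hξ : ξ = lam * a / (lam - 1)) :
    ∀ z : ℝ, 0 < z → z ≤ ξ →
      z - a ≤ (ξ - a) / ξ ^ lam * z ^ lam ∧
        ((ξ - a) / ξ ^ lam * z ^ lam = z - a ↔ z = ξ) := by
  have hl1 : 0 < lam - 1 := by linarith
  have hξa : a < ξ := by
    rw [hξ]
    rw [lt_div_iff₀ hl1]
    nlinarith
  have hξpos : 0 < ξ := lt_trans ha hξa
  set c : ℝ := (ξ - a) / ξ ^ lam with hc
  have hξpow : (0:ℝ) < ξ ^ lam := Real.rpow_pos_of_pos hξpos _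
  have hcpos : 0 < c := div_pos (by linarith) hξpow
  -- key identity : c * (lam * ξ ^ (lam - 1)) = 1
  have hkey : c * (lam * ξ ^ (lam - 1)) = 1 := by
    have h1 : ξ ^ lam = ξ ^ (lam - 1) * ξ := by
      rw [← Real.rpow_add_one (ne_of_gt hξpos)]; ring_nf
    have h2 : (ξ - a) * lam = ξ := by
      rw [hξ]; field_simp; ring
    have hp : (0:ℝ) < ξ ^ (lam - 1) := Real.rpow_pos_of_pos hξpos _
    rw [hc, h1]
    field_simp
    nlinarith
  set f : ℝ → ℝ := fun z => c * z ^ lam - (z - a) with hf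
  have hderiv : ∀ x : ℝ, HasDerivAt f (c * (lam * x ^ (lam - 1)) - 1) x := by
    intro x
    have h1 : HasDerivAt (fun z : ℝ => z ^ lam) (lam * x ^ (lam - 1)) x :=
      Real.hasDerivAt_rpow_const (Or.inr (le_of_lt hlam))
    have h2 := (h1.const_mul c).sub (hasDerivAt_id x |>.sub_const a)
    exact h2
  have hanti : StrictAntiOn f (Set.Icc 0 ξ) := by
    apply strictAntiOn_of_deriv_neg (convex_Icc 0 ξ)
    · exact Continuous.continuousOn (by
        apply Continuous.sub
        · exact continuous_const.mul (continuous_id.rpow_const (fun x => Or.inr (by positivity)))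
        · exact continuous_id.sub continuous_const)
    · intro x hx
      rw [interior_Icc] at hx
      rw [(hderiv x).deriv]
      have hxp : 0 < x := hx.1
      have hlt : x ^ (lam - 1) < ξ ^ (lam - 1) :=
        Real.rpow_lt_rpow (le_of_lt hxp) hx.2 hl1
      have : c * (lam * x ^ (lam - 1)) < c * (lam * ξ ^ (lam - 1)) := by
        apply mul_lt_mul_of_pos_left _ hcpos
        exact mul_lt_mul_of_pos_left hlt (by linarith)
      linarith [hkey]
  have hfξ : f ξ = 0 := by
    simp only [hf, hc]
    field_simp
    ring
  intro z hz hzξ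
  have hzmem : z ∈ Set.Icc (0:ℝ) ξ := ⟨le_of_lt hz, hzξ⟩
  have hξmem : ξ ∈ Set.Icc (0:ℝ) ξ := ⟨le_of_lt hξpos, le_refl _⟩
  rcases eq_or_lt_of_le hzξ with heq | hlt
  · subst heq
    constructor
    · rw [show c * z ^ lam = f z + (z - a) by simp only [hf]; ring, hfξ]; linarith
    · constructor
      · intro _; rfl
      · intro _
        have := hfξ
        simp only [hf] at this
        linarith
  · have hfz : 0 < f z := by
      have := hanti hzmem hξmem hlt
      rw [hfξ] at this
      exact this
    constructor
    · simp only [hf] at hfz; linarith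
    · constructor
      · intro heq
        exfalso
        simp only [hf] at hfz
        rw [heq] at hfz
        linarith
      · intro heq; exact absurd heq (ne_of_lt hlt)
end

section
/- Let ρ > 0, λ = √(2ρ/σ₁²) with σ₁ ≠ 0, η* = −1/λ and C₁ = −(η*/ρ)e^{λη*}. Define Φ : ℝ → ℝ by Φ(z) = z/ρ + C₁ e^{−λz} for z ≥ η* and Φ(z) = 0 for z < η*. Then Φ is continuously differentiable on ℝ, satisfies z − ρΦ(z) + (1/2)σ₁² Φ''(z) = 0 for z > η*, and satisfies z − ρΦ(z) + (1/2)σ₁² Φ''(z) = z ≤ 0 for z < η*. -/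
/-- Verification conditions for the optimal-quitting problem: with
`λ = √(2ρ/σ₁²)`, `η* = −1/λ`, `C₁ = −(η*/ρ)e^{λη*}`, the function
`Φ(z) = z/ρ + C₁e^{−λz}` for `z ≥ η*`, `Φ(z) = 0` for `z < η*`, is `C¹` on `ℝ`,
satisfies `z − ρΦ(z) + ½σ₁²Φ''(z) = 0` for `z > η*`, and satisfies
`z − ρΦ(z) + ½σ₁²Φ''(z) = z ≤ 0` for `z < η*`. -/
theorem stmt13 (ρ σ₁ lam : ℝ) (hρ : 0 < ρ) (hσ : σ₁ ≠ 0)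
    (hlam : lam = Real.sqrt (2 * ρ / σ₁ ^ 2))
    (ηstar C₁ : ℝ) (hη : ηstar = -1 / lam)
    (hC : C₁ = -(ηstar / ρ) * Real.exp (lam * ηstar))
    (Φ : ℝ → ℝ)
    (hΦ : ∀ z : ℝ,
      Φ z = if ηstar ≤ z then z / ρ + C₁ * Real.exp (-lam * z) else 0) :
    ContDiff ℝ 1 Φ ∧
    (∀ z : ℝ, ηstar < z → z - ρ * Φ z + σ₁ ^ 2 / 2 * deriv (deriv Φ) z = 0) ∧
    (∀ z : ℝ, z < ηstar →
      z - ρ * Φ z + σ₁ ^ 2 / 2 * deriv (deriv Φ) z = z ∧ z ≤ 0) := by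
  have hpos : (0:ℝ) < 2 * ρ / σ₁ ^ 2 := by positivity
  have hlampos : 0 < lam := by rw [hlam]; exact Real.sqrt_pos.mpr hpos
  have hlamne : lam ≠ 0 := ne_of_gt hlampos
  have hlamsq : lam ^ 2 = 2 * ρ / σ₁ ^ 2 := by
    rw [hlam, sq, Real.mul_self_sqrt hpos.le]
  have hlamη : lam * ηstar = -1 := by rw [hη]; field_simp
  have hηneg : ηstar < 0 := by
    rw [hη]; exact div_neg_of_neg_of_pos (by norm_num) hlampos
  set f : ℝ → ℝ := fun z => z / ρ + C₁ * Real.exp (-lam * z) with hf_def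
  set f' : ℝ → ℝ := fun z => 1 / ρ + C₁ * (Real.exp (-lam * z) * -lam) with hf'_def
  set f'' : ℝ → ℝ := fun z => C₁ * (Real.exp (-lam * z) * -lam * -lam) with hf''_def
  have hexp : Real.exp (lam * ηstar) * Real.exp (-lam * ηstar) = 1 := by
    rw [← Real.exp_add, neg_mul, add_neg_cancel, Real.exp_zero]
  have hCexp : C₁ * Real.exp (-lam * ηstar) = -(ηstar / ρ) := by
    rw [hC, mul_assoc, hexp, mul_one]
  have hfη : f ηstar = 0 := by
    simp only [hf_def, hCexp]; ring
  have hf'η : f' ηstar = 0 := by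
    simp only [hf'_def]
    have : C₁ * (Real.exp (-lam * ηstar) * -lam)
        = -(ηstar / ρ) * -lam := by rw [← mul_assoc, hCexp]
    rw [this]
    field_simp
    nlinarith [hlamη]
  have he : ∀ z : ℝ, HasDerivAt (fun z => Real.exp (-lam * z))
      (Real.exp (-lam * z) * -lam) z := by
    intro z
    have h1 : HasDerivAt (fun z : ℝ => -lam * z) (-lam) z := by
      simpa using (hasDerivAt_id z).const_mul (-lam)
    exact h1.exp
  have hf : ∀ z : ℝ, HasDerivAt f (f' z) z := by
    intro z
    have := ((hasDerivAt_id z).div_const ρ).add ((he z).const_mul C₁)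
    simpa [hf_def, hf'_def, Pi.add_def] using this
  have hf' : ∀ z : ℝ, HasDerivAt f' (f'' z) z := by
    intro z
    have := (hasDerivAt_const z (1/ρ)).add (((he z).mul_const (-lam)).const_mul C₁)
    simpa [hf'_def, hf''_def, Pi.add_def] using this
  have hΦIci : ∀ z : ℝ, ηstar ≤ z → Φ z = f z := fun z hz => by
    rw [hΦ z, if_pos hz]
  have hΦIic : ∀ z : ℝ, z ≤ ηstar → Φ z = 0 := by
    intro z hz
    rcases lt_or_eq_of_le hz with h | h
    · rw [hΦ z, if_neg (not_le.mpr h)]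
    · rw [h, hΦIci ηstar le_rfl, hfη]
  set ψ : ℝ → ℝ := fun z => if ηstar ≤ z then f' z else 0 with hψ_def
  have hd : ∀ z : ℝ, HasDerivAt Φ (ψ z) z := by
    intro z
    rcases lt_trichotomy z ηstar with h | h | h
    · have heq : Φ =ᶠ[nhds z] (fun _ => (0:ℝ)) :=
        Filter.eventuallyEq_of_mem (Iio_mem_nhds h)
          (fun y hy => hΦIic y (le_of_lt (Set.mem_Iio.mp hy)))
      have : HasDerivAt Φ 0 z :=
        (hasDerivAt_const z (0:ℝ)).congr_of_eventuallyEq heq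
      simpa [hψ_def, not_le.mpr h] using this
    · subst h
      have hub : HasDerivWithinAt Φ 0 (Set.Ici z) z := by
        have h0 := (hf z).hasDerivWithinAt (s := Set.Ici z)
        rw [hf'η] at h0
        exact h0.congr (fun x hx => hΦIci x (Set.mem_Ici.mp hx)) (hΦIci z le_rfl)
      have hlb : HasDerivWithinAt Φ 0 (Set.Iic z) z := by
        have h0 := (hasDerivAt_const z (0:ℝ)).hasDerivWithinAt (s := Set.Iic z)
        exact h0.congr (fun x hx => hΦIic x (Set.mem_Iic.mp hx)) (hΦIic z le_rfl)
      have := hlb.union hub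
      rw [Set.Iic_union_Ici] at this
      have h2 := this.hasDerivAt (by simp)
      simpa [hψ_def, hf'η] using h2
    · have heq : Φ =ᶠ[nhds z] f :=
        Filter.eventuallyEq_of_mem (Ioi_mem_nhds h)
          (fun y hy => hΦIci y (le_of_lt (Set.mem_Ioi.mp hy)))
      have : HasDerivAt Φ (f' z) z := (hf z).congr_of_eventuallyEq heq
      simpa [hψ_def, h.le] using this
  have hderivΦ : deriv Φ = ψ := funext fun z => (hd z).deriv
  have hψcont : Continuous ψ := by
    apply Continuous.if_le
    · exact continuous_const.add (continuous_const.mul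
        ((Real.continuous_exp.comp (continuous_const.mul continuous_id)).mul
          continuous_const))
    · exact continuous_const
    · exact continuous_const
    · exact continuous_id
    · intro x hx; rw [← hx, hf'η]
  have hc1 : ContDiff ℝ 1 Φ := by
    rw [contDiff_one_iff_deriv]
    exact ⟨fun z => (hd z).differentiableAt, hderivΦ ▸ hψcont⟩
  refine ⟨hc1, ?_, ?_⟩
  · intro z hz
    have heq : ψ =ᶠ[nhds z] f' :=
      Filter.eventuallyEq_of_mem (Ioi_mem_nhds hz)
        (fun y hy => by simp [hψ_def, le_of_lt (Set.mem_Ioi.mp hy)])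
    have hd2 : deriv (deriv Φ) z = f'' z := by
      rw [hderivΦ, heq.deriv_eq, (hf' z).deriv]
    rw [hd2, hΦIci z hz.le]
    have hσsq : σ₁ ^ 2 ≠ 0 := pow_ne_zero 2 hσ
    have hco : σ₁ ^ 2 / 2 * (lam * lam) = ρ := by
      have : lam * lam = 2 * ρ / σ₁ ^ 2 := by rw [← sq]; exact hlamsq
      rw [this]; field_simp
    simp only [hf_def, hf''_def]
    have h1 : ρ * (z / ρ) = z := by field_simp
    linear_combination (C₁ * Real.exp (-lam * z)) * hco - h1
  · intro z hz
    have heq : ψ =ᶠ[nhds z] (fun _ => (0:ℝ)) :=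
      Filter.eventuallyEq_of_mem (Iio_mem_nhds hz)
        (fun y hy => by simp [hψ_def, not_le.mpr (Set.mem_Iio.mp hy)])
    have hd2 : deriv (deriv Φ) z = 0 := by
      rw [hderivΦ, heq.deriv_eq, deriv_const]
    have hΦ0 : Φ z = 0 := hΦIic z hz.le
    refine ⟨by rw [hd2, hΦ0]; ring, ?_⟩
    linarith
end

section
/- Let ρ > α₀ > 0, σ₁ ≠ 0, a > 0, let λ₁ be the positive root of α₀λ + (1/2)σ₁²λ(λ−1) = ρ, and set ξ* = λ₁a/(λ₁ − 1). Define, for z > 0, φ(z) = ((ξ* − a)/(ξ*)^{λ₁}) z^{λ₁} if z ≤ ξ* and φ(z) = z − a if z ≥ ξ*. Then for z < ξ*: α₀ z φ'(z) + (1/2)σ₁² z² φ''(z) − ρ φ(z) = 0, and for z > ξ*: α₀ z φ'(z) + (1/2)σ₁² z² φ''(z) − ρ φ(z) = (α₀ − ρ)z + ρa ≤ 0 whenever z ≥ ξ*. -/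
/-- One-dimensional verification conditions for the optimal selling problem:
with `λ₁` the positive root of `α₀λ + ½σ₁²λ(λ−1) = ρ` (where `0 < α₀ < ρ`,
`σ₁ ≠ 0`, `a > 0`) and `ξ* = λ₁a/(λ₁−1)`, the candidate value function
`φ(z) = ((ξ*−a)/(ξ*)^{λ₁}) z^{λ₁}` for `z ≤ ξ*`, `φ(z) = z − a` for `z ≥ ξ*`,
satisfies `α₀zφ' + ½σ₁²z²φ'' − ρφ = 0` on `0 < z < ξ*`, equals
`(α₀−ρ)z + ρa` on `z > ξ*`, and `(α₀−ρ)z + ρa ≤ 0` whenever `z ≥ ξ*`. -/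
theorem stmt15 (α₀ ρ σ₁ a : ℝ) (hα : 0 < α₀) (hαρ : α₀ < ρ) (hσ : σ₁ ≠ 0)
    (ha : 0 < a) (lam₁ : ℝ) (hlam₁pos : 0 < lam₁)
    (hroot : α₀ * lam₁ + σ₁ ^ 2 / 2 * lam₁ * (lam₁ - 1) = ρ)
    (ξstar : ℝ) (hξ : ξstar = lam₁ * a / (lam₁ - 1))
    (φ : ℝ → ℝ)
    (hφ : ∀ z : ℝ,
      φ z = if z ≤ ξstar then (ξstar - a) / ξstar ^ lam₁ * z ^ lam₁ else z - a) :
    (∀ z : ℝ, 0 < z → z < ξstar →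
      α₀ * z * deriv φ z + σ₁ ^ 2 / 2 * z ^ 2 * deriv (deriv φ) z - ρ * φ z = 0) ∧
    (∀ z : ℝ, ξstar < z →
      α₀ * z * deriv φ z + σ₁ ^ 2 / 2 * z ^ 2 * deriv (deriv φ) z - ρ * φ z =
        (α₀ - ρ) * z + ρ * a) ∧
    (∀ z : ℝ, ξstar ≤ z → (α₀ - ρ) * z + ρ * a ≤ 0) := by
  have hσ2 : 0 < σ₁ ^ 2 := by positivity
  have hlam1 : 1 < lam₁ := by
    by_contra h
    push_neg at h
    nlinarith [mul_nonneg (by positivity : (0:ℝ) ≤ σ₁ ^ 2 / 2)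
      (mul_nonneg hlam₁pos.le (by linarith : (0:ℝ) ≤ 1 - lam₁)),
      mul_nonneg hα.le (by linarith : (0:ℝ) ≤ 1 - lam₁)]
  have hlam0 : (0:ℝ) < lam₁ - 1 := by linarith
  set C := (ξstar - a) / ξstar ^ lam₁ with hC
  -- eventual equality on Ioo 0 ξstar
  have hEq1 : ∀ z ∈ Set.Ioo (0:ℝ) ξstar, φ =ᶠ[nhds z] fun w => C * w ^ lam₁ := by
    intro z hz
    refine Filter.eventuallyEq_of_mem (isOpen_Ioo.mem_nhds hz) ?_
    intro w hw
    rw [hφ, if_pos hw.2.le]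
  have hd1 : ∀ z ∈ Set.Ioo (0:ℝ) ξstar,
      deriv φ z = C * (lam₁ * z ^ (lam₁ - 1)) := by
    intro z hz
    rw [(hEq1 z hz).deriv_eq]
    exact ((Real.hasDerivAt_rpow_const (Or.inl hz.1.ne')).const_mul C).deriv
  have hd2 : ∀ z ∈ Set.Ioo (0:ℝ) ξstar,
      deriv (deriv φ) z = C * lam₁ * ((lam₁ - 1) * z ^ (lam₁ - 1 - 1)) := by
    intro z hz
    have hEq2 : deriv φ =ᶠ[nhds z] fun w => C * lam₁ * w ^ (lam₁ - 1) := by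
      refine Filter.eventuallyEq_of_mem (isOpen_Ioo.mem_nhds hz) ?_
      intro w hw
      rw [hd1 w hw]; ring
    rw [hEq2.deriv_eq]
    exact ((Real.hasDerivAt_rpow_const (Or.inl hz.1.ne')).const_mul (C * lam₁)).deriv
  refine ⟨?_, ?_, ?_⟩
  · intro z hz0 hzξ
    have hz : z ∈ Set.Ioo (0:ℝ) ξstar := ⟨hz0, hzξ⟩
    rw [hd1 z hz, hd2 z hz, hφ, if_pos hzξ.le]
    have ht1 : z ^ (lam₁ - 1) = z * z ^ (lam₁ - 1 - 1) := by
      have h := Real.rpow_add hz0 1 (lam₁ - 1 - 1)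
      rw [Real.rpow_one, show (1:ℝ) + (lam₁ - 1 - 1) = lam₁ - 1 by ring] at h
      exact h
    have ht2 : z ^ lam₁ = z ^ 2 * z ^ (lam₁ - 1 - 1) := by
      have h := Real.rpow_add hz0 2 (lam₁ - 1 - 1)
      rw [show (2:ℝ) + (lam₁ - 1 - 1) = lam₁ by ring,
        show z ^ (2:ℝ) = z ^ 2 by rw [← Real.rpow_natCast z 2]; norm_num] at h
      exact h
    rw [ht1, ht2]
    linear_combination (C * z ^ 2 * z ^ (lam₁ - 1 - 1)) * hroot
  · intro z hz
    have hEq : φ =ᶠ[nhds z] fun w => w - a := by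
      refine Filter.eventuallyEq_of_mem (isOpen_Ioi.mem_nhds hz) ?_
      intro w hw
      rw [hφ, if_neg (not_le.mpr hw)]
    have hD1 : ∀ w ∈ Set.Ioi ξstar, deriv φ w = 1 := by
      intro w hw
      have hEw : φ =ᶠ[nhds w] fun u => u - a := by
        refine Filter.eventuallyEq_of_mem (isOpen_Ioi.mem_nhds hw) ?_
        intro u hu
        rw [hφ, if_neg (not_le.mpr hu)]
      rw [hEw.deriv_eq]
      simpa using ((hasDerivAt_id w).sub_const a).deriv
    have hD2 : deriv (deriv φ) z = 0 := by
      have hEq2 : deriv φ =ᶠ[nhds z] fun _ => (1:ℝ) :=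
        Filter.eventuallyEq_of_mem (isOpen_Ioi.mem_nhds hz) hD1
      rw [hEq2.deriv_eq, deriv_const]
    rw [hD1 z hz, hD2, hφ, if_neg (not_le.mpr hz)]
    ring
  · intro z hz
    have hlam' : α₀ * lam₁ < ρ := by
      nlinarith [mul_pos (mul_pos (half_pos hσ2) hlam₁pos) hlam0]
    have hξpos : 0 < ξstar := by
      rw [hξ]; exact div_pos (mul_pos hlam₁pos ha) hlam0
    have hx : ξstar * (lam₁ - 1) = lam₁ * a := by
      rw [hξ]; field_simp
    have key : (α₀ - ρ) * ξstar + ρ * a ≤ 0 := by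
      nlinarith [hx, mul_pos ha hlam0, hξpos]
    have h1 : (α₀ - ρ) * z ≤ (α₀ - ρ) * ξstar :=
      mul_le_mul_of_nonpos_left hz (by linarith : α₀ - ρ ≤ 0)
    linarith
end
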